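/- Theorem 6.1: A diamond graph (G, 𝓖) is Gromov hyperbolic if and only if there exists a constant ℓ > 0 such that for every vertex z and any two geodesic paths π(o, x_1, …, x_n, z) and π(o, y_1, …, y_n, z) from the root o to z, d(x_i, y_i) ≤ ℓ for all 1 ≤ i ≤ n, where d is the graph distance. -/
import Mathlib


open Metric Filter

namespace HypIFS

/-- The Gromov product `|x ∧ y| = ½(|x| + |y| − d(x,y))` with respect to a root `o`. -/
noncomputable def gprod {V : Type*} (G : SimpleGraph V) (o x y : V) : ℝ :=
  ((G.dist o x : ℝ) + (G.dist o y : ℝ) - (G.dist x y : ℝ)) / 2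

/-- Gromov hyperbolicity of a graph with basepoint `o`. -/
def GromovHyperbolic {V : Type*} (G : SimpleGraph V) (o : V) : Prop :=
  ∃ δ : ℝ, 0 ≤ δ ∧ ∀ x y z : V,
    min (gprod G o x z) (gprod G o z y) - δ ≤ gprod G o x y

/-- Distance along a chain of adjacent vertices. -/
lemma chain_dist_seg {V : Type*} {G : SimpleGraph V} (hconn : G.Connected)
    (p : ℕ → V) {i j : ℕ} (hij : i ≤ j)
    (h : ∀ t, i ≤ t → t < j → G.Adj (p t) (p (t + 1))) :
    G.dist (p i) (p j) ≤ j - i := by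
  induction j, hij using Nat.le_induction with
  | base => simp [SimpleGraph.dist_self]
  | succ j hij ih =>
    have h1 : G.dist (p j) (p (j + 1)) = 1 :=
      SimpleGraph.dist_eq_one_iff_adj.mpr (h j hij (by omega))
    have h2 : G.dist (p i) (p j) ≤ j - i := ih (fun t ht htj => h t ht (by omega))
    have tri : G.dist (p i) (p (j + 1)) ≤ G.dist (p i) (p j) + G.dist (p j) (p (j + 1)) :=
      hconn.dist_triangle
    omega

/-- Existence of a confluence vertex: every pair of vertices admits a
"V-shaped" geodesic, descending then ascending with respect to the level
function `|·| = dist o ·`.  This is the key consequence of the diamond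
property. -/
lemma exists_confluence {V : Type*} {G : SimpleGraph V} {o : V} (hconn : G.Connected)
    (hlevel : ∀ x y : V, G.Adj x y →
      G.dist o x + 1 = G.dist o y ∨ G.dist o y + 1 = G.dist o x)
    (hdiamond : ∀ x y z : V, G.Adj x y → G.Adj y z → x ≠ z →
      G.dist o x = G.dist o z → G.dist o x + 1 = G.dist o y →
      ∃ y' : V, G.dist o y' + 1 = G.dist o x ∧ G.Adj x y' ∧ G.Adj y' z) :
    ∀ k (x z : V), G.dist x z = k → ∃ w : V,
      G.dist x w + G.dist o w = G.dist o x ∧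
      G.dist w z + G.dist o w = G.dist o z ∧
      G.dist x z = G.dist x w + G.dist w z := by
  intro k
  induction k using Nat.strong_induction_on with
  | _ k IH =>
  intro x z hk
  rcases k with _ | m
  · have hxz : x = z := hconn.dist_eq_zero_iff.mp hk
    subst hxz
    exact ⟨x, by simp [SimpleGraph.dist_self], by simp [SimpleGraph.dist_self],
      by simp [SimpleGraph.dist_self]⟩
  · -- `k = m + 1`
    -- the "descend" step: if a neighbour `v` of `x` one level below satisfies
    -- `dist v z = m`, we conclude by the induction hypothesis.
    have descend : ∀ v : V, G.Adj x v → G.dist o v + 1 = G.dist o x →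
        G.dist v z = m → ∃ w : V,
        G.dist x w + G.dist o w = G.dist o x ∧
        G.dist w z + G.dist o w = G.dist o z ∧
        G.dist x z = G.dist x w + G.dist w z := by
      intro v hadj hlev hvz
      obtain ⟨w, h1, h2, h3⟩ := IH m (by omega) v z hvz
      have hxv : G.dist x v = 1 := SimpleGraph.dist_eq_one_iff_adj.mpr hadj
      have t1 : G.dist x w ≤ G.dist x v + G.dist v w := hconn.dist_triangle
      have t2 : G.dist o x ≤ G.dist o w + G.dist w x := hconn.dist_triangle
      have hc : G.dist w x = G.dist x w := SimpleGraph.dist_comm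
      have t3 : G.dist x z ≤ G.dist x w + G.dist w z := hconn.dist_triangle
      exact ⟨w, by omega, h2, by omega⟩
    obtain ⟨W, hW⟩ := hconn.exists_walk_length_eq_dist x z
    set v := W.getVert 1 with hv
    have hWlen : W.length = m + 1 := by rw [hW, hk]
    have hadjxv : G.Adj x v := by
      have := W.adj_getVert_succ (i := 0) (by omega)
      simpa [SimpleGraph.Walk.getVert_zero] using this
    have hWend : W.getVert (m + 1) = z := by
      rw [show m + 1 = W.length from hWlen.symm]
      exact W.getVert_length
    have hvz_le : G.dist v z ≤ m := by
      have := chain_dist_seg hconn (fun t => W.getVert t) (i := 1) (j := m + 1)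
        (by omega) (fun t _ htj => W.adj_getVert_succ (by omega))
      simpa [hWend] using this
    have hxv : G.dist x v = 1 := SimpleGraph.dist_eq_one_iff_adj.mpr hadjxv
    have hvz : G.dist v z = m := by
      have tri : G.dist x z ≤ G.dist x v + G.dist v z := hconn.dist_triangle
      omega
    rcases hlevel x v hadjxv with hup | hdown
    · -- ascend case: `|x| + 1 = |v|`
      obtain ⟨w', h1, h2, h3⟩ := IH m (by omega) v z hvz
      by_cases hvw : G.dist v w' = 0
      · -- the geodesic from `x` goes straight up: take `w = x`
        have hvw' : v = w' := hconn.dist_eq_zero_iff.mp hvw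
        refine ⟨x, by simp [SimpleGraph.dist_self], ?_, by simp [SimpleGraph.dist_self]⟩
        rw [← hvw'] at h2
        omega
      · obtain ⟨W2, hW2⟩ := hconn.exists_walk_length_eq_dist v w'
        set d := G.dist v w' with hd
        set u := W2.getVert 1 with hu
        have hW2len : W2.length = d := hW2
        have hadjvu : G.Adj v u := by
          have := W2.adj_getVert_succ (i := 0) (by omega)
          simpa [SimpleGraph.Walk.getVert_zero] using this
        have hW2end : W2.getVert d = w' := by
          rw [show d = W2.length from hW2len.symm]
          exact W2.getVert_length
        have huw : G.dist u w' ≤ d - 1 := by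
          have := chain_dist_seg hconn (fun t => W2.getVert t) (i := 1) (j := d)
            (by omega) (fun t _ htj => W2.adj_getVert_succ (by omega))
          simpa [hW2end] using this
        have hou : G.dist o u ≤ G.dist o w' + G.dist w' u := hconn.dist_triangle
        have hcuw : G.dist w' u = G.dist u w' := SimpleGraph.dist_comm
        have hulev : G.dist o u + 1 = G.dist o v := by
          rcases hlevel v u hadjvu with h' | h'
          · omega
          · exact h'
        by_cases hux : u = x
        · exfalso
          have t1 : G.dist x z ≤ G.dist x w' + G.dist w' z := hconn.dist_triangle
          have t2 : G.dist x w' ≤ d - 1 := hux ▸ huw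
          omega
        · obtain ⟨y', hy'lev, hadjxy', hadjy'u⟩ :=
            hdiamond x v u hadjxv hadjvu (fun h => hux h.symm) (by omega) hup
          have hy'u : G.dist y' u = 1 := SimpleGraph.dist_eq_one_iff_adj.mpr hadjy'u
          have hxy' : G.dist x y' = 1 := SimpleGraph.dist_eq_one_iff_adj.mpr hadjxy'
          have t1 : G.dist y' z ≤ G.dist y' u + G.dist u z := hconn.dist_triangle
          have t2 : G.dist u z ≤ G.dist u w' + G.dist w' z := hconn.dist_triangle
          have t3 : G.dist x z ≤ G.dist x y' + G.dist y' z := hconn.dist_triangle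
          exact descend y' hadjxy' hy'lev (by omega)
    · exact descend v hadjxv hdown hvz

/-- From a confluence vertex `w` below `z` one constructs a geodesic chain
from `o` to `z` passing through `w`. -/
lemma exists_geodesic_fun {V : Type*} {G : SimpleGraph V} (hconn : G.Connected)
    (o z w : V) (hw : G.dist w z + G.dist o w = G.dist o z) :
    ∃ p : ℕ → V, p 0 = o ∧ p (G.dist o z) = z ∧
      (∀ i < G.dist o z, G.Adj (p i) (p (i + 1))) ∧
      (∀ m ≤ G.dist o w, G.dist (p m) w ≤ G.dist o w - m) := by
  obtain ⟨W1, hW1⟩ := hconn.exists_walk_length_eq_dist o w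
  obtain ⟨W2, hW2⟩ := hconn.exists_walk_length_eq_dist w z
  set a := G.dist o w with ha
  set c := G.dist w z with hc
  set N := G.dist o z with hN
  refine ⟨fun i => if i ≤ a then W1.getVert i else W2.getVert (i - a), ?_, ?_, ?_, ?_⟩
  all_goals
    have hW1a : W1.getVert a = w := by
      rw [show a = W1.length from hW1.symm]; exact W1.getVert_length
  · simp
  · have hNa : a ≤ N := by omega
    by_cases h : N ≤ a
    · have hNa' : N = a := by omega
      have hc0 : c = 0 := by omega
      have hwz : w = z := hconn.dist_eq_zero_iff.mp (show G.dist w z = 0 by omega)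
      simp only [if_pos h]
      rw [hNa', hW1a]
      exact hwz
    · simp only [if_neg h]
      rw [show N - a = c by omega, show c = W2.length from hW2.symm]
      exact W2.getVert_length
  · intro i hi
    by_cases h1 : i + 1 ≤ a
    · simp only [if_pos (show i ≤ a by omega), if_pos h1]
      exact W1.adj_getVert_succ (by omega)
    · have hai : a ≤ i := by omega
      have he : ∀ j, a ≤ j →
          (if j ≤ a then W1.getVert j else W2.getVert (j - a)) = W2.getVert (j - a) := by
        intro j hj
        by_cases h' : j ≤ a
        · have : j = a := le_antisymm h' hj
          subst this
          simp only [if_pos le_rfl, Nat.sub_self, SimpleGraph.Walk.getVert_zero, hW1a]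
        · simp only [if_neg h']
      show G.Adj (if i ≤ a then W1.getVert i else W2.getVert (i - a))
        (if i + 1 ≤ a then W1.getVert (i + 1) else W2.getVert (i + 1 - a))
      rw [he i hai, he (i + 1) (by omega), show i + 1 - a = (i - a) + 1 by omega]
      exact W2.adj_getVert_succ (by omega)
  · intro m hm
    simp only [if_pos hm]
    have hch := chain_dist_seg hconn (fun t => W1.getVert t) (i := m) (j := a) hm
      (fun t _ htj => W1.adj_getVert_succ (by omega))
    simpa [hW1a] using hch

/-- Theorem 6.1: a diamond graph is Gromov hyperbolic iff there is `ℓ > 0` such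
that any two geodesic paths `π(o, x₁, …, x_n, z)` and `π(o, y₁, …, y_n, z)` from
the root `o` to a vertex `z` satisfy `d(x_i, y_i) ≤ ℓ` for all `1 ≤ i ≤ n`. -/
theorem diamond_graph_hyperbolic_iff {V : Type*} (G : SimpleGraph V) (o : V)
    (hconn : G.Connected)
    (hlf : ∀ x : V, {y | G.Adj x y}.Finite)
    (hlevel : ∀ x y : V, G.Adj x y →
      G.dist o x + 1 = G.dist o y ∨ G.dist o y + 1 = G.dist o x)
    (hdiamond : ∀ x y z : V, G.Adj x y → G.Adj y z → x ≠ z →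
      G.dist o x = G.dist o z → G.dist o x + 1 = G.dist o y →
      ∃ y' : V, G.dist o y' + 1 = G.dist o x ∧ G.Adj x y' ∧ G.Adj y' z) :
    GromovHyperbolic G o ↔
      ∃ L : ℕ, 0 < L ∧ ∀ (z : V) (n : ℕ) (p q : ℕ → V),
        p 0 = o → q 0 = o → p (n + 1) = z → q (n + 1) = z →
        (∀ i ≤ n, G.Adj (p i) (p (i + 1))) →
        (∀ i ≤ n, G.Adj (q i) (q (i + 1))) →
        G.dist o z = n + 1 →
        ∀ i : ℕ, 1 ≤ i → i ≤ n → G.dist (p i) (q i) ≤ L := by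
  constructor
  · -- hyperbolicity implies fellow travelling of geodesics to a common endpoint
    rintro ⟨δ, hδ0, hδ⟩
    refine ⟨⌈2 * δ⌉₊ + 1, Nat.succ_pos _, ?_⟩
    intro z n p q hp0 hq0 hpz hqz hpa hqa hdz i hi1 hin
    have hdp : G.dist o (p i) = i ∧ G.dist (p i) z = n + 1 - i := by
      have u1 : G.dist (p 0) (p i) ≤ i - 0 :=
        chain_dist_seg hconn p (by omega) (fun t _ htj => hpa t (by omega))
      have u2 : G.dist (p i) (p (n + 1)) ≤ (n + 1) - i :=
        chain_dist_seg hconn p (by omega) (fun t _ htj => hpa t (by omega))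
      rw [hp0] at u1; rw [hpz] at u2
      have tri : G.dist o z ≤ G.dist o (p i) + G.dist (p i) z := hconn.dist_triangle
      have tri2 : G.dist o (p i) ≤ G.dist o z + G.dist z (p i) := hconn.dist_triangle
      have hcz : G.dist z (p i) = G.dist (p i) z := SimpleGraph.dist_comm
      omega
    have hdq : G.dist o (q i) = i ∧ G.dist (q i) z = n + 1 - i := by
      have u1 : G.dist (q 0) (q i) ≤ i - 0 :=
        chain_dist_seg hconn q (by omega) (fun t _ htj => hqa t (by omega))
      have u2 : G.dist (q i) (q (n + 1)) ≤ (n + 1) - i :=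
        chain_dist_seg hconn q (by omega) (fun t _ htj => hqa t (by omega))
      rw [hq0] at u1; rw [hqz] at u2
      have tri : G.dist o z ≤ G.dist o (q i) + G.dist (q i) z := hconn.dist_triangle
      have tri2 : G.dist o (q i) ≤ G.dist o z + G.dist z (q i) := hconn.dist_triangle
      have hcz : G.dist z (q i) = G.dist (q i) z := SimpleGraph.dist_comm
      omega
    have hmain := hδ (p i) (q i) z
    have hA : gprod G o (p i) z = (i : ℝ) := by
      unfold gprod
      rw [hdp.1, hdp.2, hdz, Nat.cast_sub (by omega : i ≤ n + 1)]
      push_cast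
      ring
    have hB : gprod G o z (q i) = (i : ℝ) := by
      unfold gprod
      have hcz : G.dist z (q i) = n + 1 - i := by
        rw [SimpleGraph.dist_comm]; exact hdq.2
      rw [hdq.1, hdz, hcz, Nat.cast_sub (by omega : i ≤ n + 1)]
      push_cast
      ring
    have hC : gprod G o (p i) (q i) =
        ((i : ℝ) + i - (G.dist (p i) (q i) : ℝ)) / 2 := by
      unfold gprod
      rw [hdp.1, hdq.1]
    rw [hA, hB, hC, min_self] at hmain
    have hle : (G.dist (p i) (q i) : ℝ) ≤ ((⌈2 * δ⌉₊ + 1 : ℕ) : ℝ) := by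
      have hceil : 2 * δ ≤ (⌈2 * δ⌉₊ : ℝ) := Nat.le_ceil _
      push_cast
      linarith
    exact_mod_cast hle
  · -- fellow travelling implies hyperbolicity
    rintro ⟨L, hL, hfellow⟩
    refine ⟨(L : ℝ), by positivity, ?_⟩
    intro x y z
    obtain ⟨w1, h1x, h1z, h1s⟩ :=
      exists_confluence hconn hlevel hdiamond (G.dist x z) x z rfl
    obtain ⟨w2, h2z, h2y, h2s⟩ :=
      exists_confluence hconn hlevel hdiamond (G.dist z y) z y rfl
    obtain ⟨a, ha⟩ : ∃ a, G.dist o w1 = a := ⟨_, rfl⟩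
    obtain ⟨b, hb⟩ : ∃ b, G.dist o w2 = b := ⟨_, rfl⟩
    obtain ⟨N, hN⟩ : ∃ N, G.dist o z = N := ⟨_, rfl⟩
    obtain ⟨m, hm⟩ : ∃ m, m = min a b := ⟨_, rfl⟩
    rw [ha] at h1x
    rw [ha, hN] at h1z
    rw [hb, hN] at h2z
    rw [hb] at h2y
    -- the key combinatorial inequality
    have key : G.dist x y + 2 * m ≤ G.dist o x + G.dist o y + 2 * L := by
      have trixy : G.dist x y ≤ G.dist x o + G.dist o y := hconn.dist_triangle
      have hcxo : G.dist x o = G.dist o x := SimpleGraph.dist_comm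
      by_cases hm0 : m = 0
      · omega
      · by_cases hmN : N ≤ m
        · -- then `w1 = w2 = z`
          have hw1z : w1 = z := hconn.dist_eq_zero_iff.mp (show G.dist w1 z = 0 by omega)
          have hw2z : w2 = z :=
            (hconn.dist_eq_zero_iff.mp (show G.dist z w2 = 0 by omega)).symm
          have t : G.dist x y ≤ G.dist x z + G.dist z y := hconn.dist_triangle
          have e1 : G.dist x z + a = G.dist o x := by rw [← hw1z]; exact h1x
          have e2 : G.dist z y + b = G.dist o y := by rw [← hw2z]; exact h2y
          omega
        · -- main case : `1 ≤ m ≤ N - 1`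
          have hw2z' : G.dist w2 z + G.dist o w2 = G.dist o z := by
            have hcc : G.dist w2 z = G.dist z w2 := SimpleGraph.dist_comm
            rw [hcc, hb, hN]; omega
          have h1z' : G.dist w1 z + G.dist o w1 = G.dist o z := by rw [ha, hN]; exact h1z
          obtain ⟨p, hp0, hpN, hpa, hpw⟩ := exists_geodesic_fun hconn o z w1 h1z'
          obtain ⟨q, hq0, hqN, hqa, hqw⟩ := exists_geodesic_fun hconn o z w2 hw2z'
          rw [hN] at hpN hpa hqN hqa
          rw [ha] at hpw
          rw [hb] at hqw
          have hNpos : 1 ≤ N := by omega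
          have hfel := hfellow z (N - 1) p q hp0 hq0
            (by rw [show N - 1 + 1 = N by omega]; exact hpN)
            (by rw [show N - 1 + 1 = N by omega]; exact hqN)
            (fun i hi => hpa i (by omega)) (fun i hi => hqa i (by omega))
            (by omega) m (by omega) (by omega)
          have hxw1 : G.dist x (p m) ≤ G.dist x w1 + G.dist w1 (p m) := hconn.dist_triangle
          have hcw1 : G.dist w1 (p m) = G.dist (p m) w1 := SimpleGraph.dist_comm
          have hpw1 : G.dist (p m) w1 ≤ a - m := hpw m (by omega)
          have hqw2 : G.dist (q m) w2 ≤ b - m := hqw m (by omega)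
          have hyw2 : G.dist (q m) y ≤ G.dist (q m) w2 + G.dist w2 y := hconn.dist_triangle
          have t1 : G.dist x y ≤ G.dist x (p m) + G.dist (p m) y := hconn.dist_triangle
          have t2 : G.dist (p m) y ≤ G.dist (p m) (q m) + G.dist (q m) y :=
            hconn.dist_triangle
          omega
    -- convert to the real-valued statement about Gromov products
    have hgxz : gprod G o x z = (a : ℝ) := by
      unfold gprod
      have hxzv : (G.dist x z : ℝ) = (G.dist o x : ℝ) + (G.dist o z : ℝ) - 2 * a := by
        have he : G.dist x z + 2 * a = G.dist o x + G.dist o z := by omega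
        have he' := congrArg (fun t : ℕ => (t : ℝ)) he
        push_cast at he'
        linarith
      rw [hxzv]; ring
    have hgzy : gprod G o z y = (b : ℝ) := by
      unfold gprod
      have hzyv : (G.dist z y : ℝ) = (G.dist o z : ℝ) + (G.dist o y : ℝ) - 2 * b := by
        have he : G.dist z y + 2 * b = G.dist o z + G.dist o y := by omega
        have he' := congrArg (fun t : ℕ => (t : ℝ)) he
        push_cast at he'
        linarith
      rw [hzyv]; ring
    rw [hgxz, hgzy]
    have hmin : min (a : ℝ) (b : ℝ) = (m : ℝ) := by
      rw [hm]; simp [Nat.cast_min]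
    rw [hmin]
    unfold gprod
    have hkeyR : (G.dist x y : ℝ) + 2 * m ≤
        (G.dist o x : ℝ) + (G.dist o y : ℝ) + 2 * L := by
      exact_mod_cast key
    linarith

end HypIFS
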